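/- For real constants a ≥ 0, b > 0, a natural number D ≥ 1, a natural number n ≥ 0, and B > 0, the multi-sum S(B) = ∑_{p₁,...,p_D = 1}^∞ (∑_{l=1}^D p_l^a)^n · e^{-B ∑_{l=1}^D p_l^b} satisfies: there exist constants c₁, c₂ > 0 such that for all sufficiently small B > 0, c₁ · B^{-(an+D)/b} ≤ S(B) ≤ c₂ · B^{-(an+D)/b}. -/

import Mathlib

/-!
The exponential factorizes over the coordinates, and `(∑ₗ (pₗ + 1) ^ a) ^ n` lies between
`(pₖ + 1) ^ (a n)`, for any fixed `k`, and `D ^ n ∑ₖ (pₖ + 1) ^ (a n)`. So, writing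
`T_c(B) = ∑_q (q + 1) ^ c e^{-B (q + 1) ^ b}`, the sum `S(B)` lies between
`T_{an}(B) T_0(B) ^ (D - 1)` and `D ^ (n + 1)` times it. Each `T_c(B)` is of order
`B ^ (-(c + 1) / b)`: from above by comparison with the Gamma integral
`∫₀^∞ t ^ c e^{-B 2^{-b} t ^ b} dt`; from below, for `B ≤ 1`, by keeping the terms with
`q + 1 ≤ B ^ (-1 / b)`, where the exponential is at least `e⁻¹`, and comparing
`∑_{q < N} (q + 1) ^ c` with `∫₀^N t ^ c dt`.
-/

open Real Finset MeasureTheory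

noncomputable def spectralTerm (b c B : ℝ) (q : ℕ) : ℝ :=
  ((q : ℝ) + 1) ^ c * exp (-B * ((q : ℝ) + 1) ^ b)

lemma spectralTerm_nonneg (b c B : ℝ) (q : ℕ) : 0 ≤ spectralTerm b c B q := by
  unfold spectralTerm
  positivity

section OneDimensional

variable {b c B : ℝ}

/-- On `[q + 1, q + 2]` we have `q + 1 ≤ t ≤ 2 (q + 1)`, so after dividing `B` by `2 ^ b` the
integrand dominates the summand. -/
lemma spectralTerm_le_integral (hb : 0 < b) (hc : 0 ≤ c) (hB : 0 < B) (q : ℕ) :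
    spectralTerm b c B q ≤
      ∫ t in (q + 1 : ℝ)..(q + 2), t ^ c * exp (-(B / 2 ^ b) * t ^ b) := by
  have hq : (0 : ℝ) < q + 1 := by positivity
  have hint : IntervalIntegrable (fun t : ℝ => t ^ c * exp (-(B / 2 ^ b) * t ^ b)) volume
      (q + 1) (q + 2) := by
    refine ((integrableOn_rpow_mul_exp_neg_mul_rpow (by linarith) hb
      (by positivity : 0 < B / 2 ^ b)).mono_set ?_).intervalIntegrable
    rw [Set.uIcc_of_le (by linarith)]
    exact fun t ht => hq.trans_le ht.1
  calc spectralTerm b c B q = ∫ _ in (q + 1 : ℝ)..(q + 2), spectralTerm b c B q := by norm_num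
    _ ≤ _ := by
      refine intervalIntegral.integral_mono_on (by linarith) intervalIntegrable_const hint
        fun t ⟨ht₁, ht₂⟩ => ?_
      have hdouble : t ^ b ≤ 2 ^ b * ((q : ℝ) + 1) ^ b := by
        rw [← mul_rpow zero_le_two hq.le]
        have hq' : (0 : ℝ) ≤ q := q.cast_nonneg
        exact rpow_le_rpow (hq.le.trans ht₁) (by linarith) hb.le
      have hexp : -B * ((q : ℝ) + 1) ^ b ≤ -(B / 2 ^ b) * t ^ b := by
        have : B / 2 ^ b * t ^ b ≤ B * ((q : ℝ) + 1) ^ b := by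
          calc B / 2 ^ b * t ^ b ≤ B / 2 ^ b * (2 ^ b * ((q : ℝ) + 1) ^ b) := by gcongr
            _ = B * ((q : ℝ) + 1) ^ b := by field_simp
        linarith
      unfold spectralTerm
      gcongr
      exact rpow_nonneg (hq.le.trans ht₁) c

lemma sum_range_spectralTerm_le (hb : 0 < b) (hc : 0 ≤ c) (hB : 0 < B) (N : ℕ) :
    ∑ q ∈ range N, spectralTerm b c B q ≤
      2 ^ (c + 1) * Gamma ((c + 1) / b) / b * B ^ (-(c + 1) / b) := by
  set g : ℝ → ℝ := fun t => t ^ c * exp (-(B / 2 ^ b) * t ^ b)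
  have hg : IntegrableOn g (Set.Ioi 0) :=
    integrableOn_rpow_mul_exp_neg_mul_rpow (by linarith) hb (by positivity)
  calc ∑ q ∈ range N, spectralTerm b c B q
      ≤ ∑ q ∈ range N, ∫ t in (q + 1 : ℝ)..(q + 2), g t :=
        sum_le_sum fun q _ => spectralTerm_le_integral hb hc hB q
    _ = ∫ t in (1 : ℝ)..(N + 1), g t := by
        have := intervalIntegral.sum_integral_adjacent_intervals (a := fun k : ℕ => (k : ℝ) + 1)
          (n := N) (f := g) (μ := volume) fun k _ => by
            refine (hg.mono_set ?_).intervalIntegrable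
            rw [Set.uIcc_of_le (by push_cast; linarith)]
            exact fun t ht => lt_of_lt_of_le (by positivity) ht.1
        push_cast at this
        simpa [add_assoc, one_add_one_eq_two] using this
    _ ≤ ∫ t in Set.Ioi 0, g t := by
        rw [intervalIntegral.integral_of_le (by linarith)]
        refine setIntegral_mono_set hg ?_ ?_
        · filter_upwards [ae_restrict_mem measurableSet_Ioi] with t ht
          exact mul_nonneg (rpow_nonneg (le_of_lt ht) _) (exp_pos _).le
        · exact (Set.Ioc_subset_Ioi_self.trans (Set.Ioi_subset_Ioi zero_le_one)).eventuallyLE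
    _ = (B / 2 ^ b) ^ (-(c + 1) / b) * (1 / b) * Gamma ((c + 1) / b) :=
        integral_rpow_mul_exp_neg_mul_rpow hb (by linarith) (by positivity)
    _ = 2 ^ (c + 1) * Gamma ((c + 1) / b) / b * B ^ (-(c + 1) / b) := by
        rw [div_rpow hB.le (by positivity), ← rpow_mul zero_le_two,
          show b * (-(c + 1) / b) = -(c + 1) by field_simp, rpow_neg zero_le_two]
        field_simp

lemma summable_spectralTerm (hb : 0 < b) (hc : 0 ≤ c) (hB : 0 < B) :
    Summable (spectralTerm b c B) :=
  summable_of_sum_range_le (spectralTerm_nonneg b c B) (sum_range_spectralTerm_le hb hc hB)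

lemma tsum_spectralTerm_le (hb : 0 < b) (hc : 0 ≤ c) (hB : 0 < B) :
    ∑' q, spectralTerm b c B q ≤ 2 ^ (c + 1) * Gamma ((c + 1) / b) / b * B ^ (-(c + 1) / b) :=
  Real.tsum_le_of_sum_range_le (spectralTerm_nonneg b c B) (sum_range_spectralTerm_le hb hc hB)

lemma rpow_div_le_sum_range_rpow (hc : 0 ≤ c) (N : ℕ) :
    (N : ℝ) ^ (c + 1) / (c + 1) ≤ ∑ q ∈ range N, ((q : ℝ) + 1) ^ c := by
  have hmono : MonotoneOn (fun t : ℝ => t ^ c) (Set.Icc 0 (0 + N)) :=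
    fun s hs t _ hst => rpow_le_rpow hs.1 hst hc
  have := hmono.integral_le_sum
  rw [zero_add, integral_rpow (Or.inl (by linarith)), zero_rpow (by linarith), sub_zero] at this
  simpa [add_comm] using this

/-- Keep the terms with `q + 1 ≤ B ^ (-1 / b)`: their exponential factor is at least `e⁻¹`. -/
lemma le_tsum_spectralTerm (hb : 0 < b) (hc : 0 ≤ c) (hB : 0 < B) (hB1 : B ≤ 1) :
    exp (-1) / ((c + 1) * 2 ^ (c + 1)) * B ^ (-(c + 1) / b) ≤ ∑' q, spectralTerm b c B q := by
  set x := B ^ (-1 / b)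
  have hx1 : 1 ≤ x := one_le_rpow_of_pos_of_le_one_of_nonpos hB hB1
    (div_nonpos_of_nonpos_of_nonneg (by norm_num) hb.le)
  have hxpow : ∀ s, x ^ s = B ^ (-s / b) := fun s => by
    rw [← rpow_mul hB.le]
    congr 1
    ring
  set N := ⌊x⌋₊
  have hNx : (N : ℝ) ≤ x := Nat.floor_le (by linarith)
  have hxN : x / 2 ≤ N := by
    have h1 : (1 : ℝ) ≤ N := by exact_mod_cast (Nat.one_le_floor_iff x).2 hx1
    linarith [Nat.lt_floor_add_one x]
  have hterm : ∀ q ∈ range N, ((q : ℝ) + 1) ^ c * exp (-1) ≤ spectralTerm b c B q := by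
    intro q hq
    have hqN : (q : ℝ) + 1 ≤ x := by
      have : q + 1 ≤ N := mem_range.1 hq
      exact le_trans (by exact_mod_cast this) hNx
    have hqb : B * ((q : ℝ) + 1) ^ b ≤ 1 := by
      calc B * ((q : ℝ) + 1) ^ b ≤ B * x ^ b := by gcongr
        _ = 1 := by rw [hxpow, neg_div, div_self hb.ne', rpow_neg hB.le, rpow_one,
          mul_inv_cancel₀ hB.ne']
    unfold spectralTerm
    gcongr
    linarith
  calc exp (-1) / ((c + 1) * 2 ^ (c + 1)) * B ^ (-(c + 1) / b)
      = exp (-1) * ((x / 2) ^ (c + 1) / (c + 1)) := by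
        rw [div_rpow (by linarith) zero_le_two, hxpow]
        field_simp
    _ ≤ exp (-1) * ((N : ℝ) ^ (c + 1) / (c + 1)) := by gcongr
    _ ≤ exp (-1) * ∑ q ∈ range N, ((q : ℝ) + 1) ^ c := by
        gcongr
        exact rpow_div_le_sum_range_rpow hc N
    _ = ∑ q ∈ range N, ((q : ℝ) + 1) ^ c * exp (-1) := by
        rw [mul_sum]
        simp_rw [mul_comm]
    _ ≤ ∑ q ∈ range N, spectralTerm b c B q := sum_le_sum hterm
    _ ≤ ∑' q, spectralTerm b c B q :=
        (summable_spectralTerm hb hc hB).sum_le_tsum _ fun q _ => spectralTerm_nonneg b c B q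

end OneDimensional

lemma hasSum_fin_prod {ι : Type*} {D : ℕ} {f : Fin D → ι → ℝ} {s : Fin D → ℝ}
    (hf : ∀ l, HasSum (f l) (s l)) (hnn : ∀ l i, 0 ≤ f l i) :
    HasSum (fun p : Fin D → ι => ∏ l, f l (p l)) (∏ l, s l) := by
  induction D with
  | zero =>
    simp only [univ_eq_empty, prod_empty]
    exact hasSum_single (Fin.elim0 : Fin 0 → ι) fun p hp => (hp (Subsingleton.elim p _)).elim
  | succ D ih =>
    have htail : HasSum (fun p : Fin D → ι => ∏ l : Fin D, f l.succ (p l))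
        (∏ l : Fin D, s l.succ) := ih (fun l => hf l.succ) (fun l => hnn l.succ)
    have hhead_nonneg : 0 ≤ f 0 := hnn 0
    have htail_nonneg : 0 ≤ fun p : Fin D → ι => ∏ l : Fin D, f l.succ (p l) :=
      fun p => prod_nonneg fun l _ => hnn l.succ (p l)
    have hsummable := Summable.mul_of_nonneg (hf 0).summable htail.summable hhead_nonneg
      htail_nonneg
    have hmul := (hf 0).mul htail hsummable
    have hcomp : (fun p : Fin (D + 1) → ι => ∏ l, f l (p l)) ∘ (Fin.consEquiv fun _ => ι) =
        fun x => f 0 x.1 * ∏ l : Fin D, f l.succ (x.2 l) := by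
      funext x
      simp [Fin.prod_univ_succ, Fin.consEquiv]
    rw [Fin.prod_univ_succ, ← (Fin.consEquiv fun _ => ι).hasSum_iff, hcomp]
    exact hmul

lemma pow_sum_le_card_pow_mul_sum_pow {ι α : Type*} [CommSemiring α] [LinearOrder α]
    [IsStrictOrderedRing α] {s : Finset ι} (hs : s.Nonempty) {f : ι → α}
    (hf : ∀ i ∈ s, 0 ≤ f i) (n : ℕ) :
    (∑ i ∈ s, f i) ^ n ≤ (#s : α) ^ n * ∑ i ∈ s, f i ^ n := by
  obtain ⟨j, hj, hmax⟩ := s.exists_max_image f hs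
  calc (∑ i ∈ s, f i) ^ n ≤ (#s * f j) ^ n := by
        gcongr
        · exact sum_nonneg hf
        · simpa using sum_le_card_nsmul s f (f j) hmax
    _ = #s ^ n * f j ^ n := mul_pow _ _ _
    _ ≤ #s ^ n * ∑ i ∈ s, f i ^ n := by
        gcongr
        exact single_le_sum (f := fun i => f i ^ n) (fun i hi => pow_nonneg (hf i hi) n) hj

lemma prod_mul_rpow {ι : Type*} (s : Finset ι) (K e : ι → ℝ) {B : ℝ} (hB : 0 < B) :
    ∏ l ∈ s, (K l * B ^ e l) = (∏ l ∈ s, K l) * B ^ ∑ l ∈ s, e l := by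
  rw [prod_mul_distrib, rpow_sum_of_pos hB]

section MultiDimensional

variable {D : ℕ} {b B : ℝ} {c : Fin D → ℝ}

lemma hasSum_prod_spectralTerm (hb : 0 < b) (hc : 0 ≤ c) (hB : 0 < B) :
    HasSum (fun p : Fin D → ℕ => ∏ l, spectralTerm b (c l) B (p l))
      (∏ l, ∑' q, spectralTerm b (c l) B q) :=
  hasSum_fin_prod (fun l => (summable_spectralTerm hb (hc l) hB).hasSum)
    fun l => spectralTerm_nonneg b (c l) B

lemma prod_tsum_spectralTerm_le (hb : 0 < b) (hc : 0 ≤ c) (hB : 0 < B) :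
    ∏ l, ∑' q, spectralTerm b (c l) B q ≤
      (∏ l, 2 ^ (c l + 1) * Gamma ((c l + 1) / b) / b) * B ^ (-(∑ l, (c l + 1)) / b) := by
  rw [← sum_neg_distrib, sum_div, ← prod_mul_rpow _ _ _ hB]
  exact prod_le_prod (fun l _ => tsum_nonneg (spectralTerm_nonneg b (c l) B))
    fun l _ => tsum_spectralTerm_le hb (hc l) hB

lemma le_prod_tsum_spectralTerm (hb : 0 < b) (hc : 0 ≤ c) (hB : 0 < B) (hB1 : B ≤ 1) :
    (∏ l, exp (-1) / ((c l + 1) * 2 ^ (c l + 1))) * B ^ (-(∑ l, (c l + 1)) / b) ≤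
      ∏ l, ∑' q, spectralTerm b (c l) B q := by
  rw [← sum_neg_distrib, sum_div, ← prod_mul_rpow _ _ _ hB]
  refine prod_le_prod (fun l _ => ?_) fun l _ => le_tsum_spectralTerm hb (hc l) hB hB1
  have : 0 ≤ c l := hc l
  positivity

end MultiDimensional

noncomputable def spectralSummand {D : ℕ} (a b : ℝ) (n : ℕ) (B : ℝ) (p : Fin D → ℕ) : ℝ :=
  (∑ l, ((p l : ℝ) + 1) ^ a) ^ n * exp (-B * ∑ l, ((p l : ℝ) + 1) ^ b)

section Summand

variable {D : ℕ} {a b B : ℝ} {n : ℕ}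

lemma prod_spectralTerm_single (l₀ : Fin D) (p : Fin D → ℕ) :
    ∏ l, spectralTerm b ((Pi.single l₀ (a * n) : Fin D → ℝ) l) B (p l) =
      (((p l₀ : ℝ) + 1) ^ a) ^ n * exp (-B * ∑ l, ((p l : ℝ) + 1) ^ b) := by
  simp only [spectralTerm, prod_mul_distrib, ← exp_sum, mul_sum]
  rw [Fintype.prod_eq_single l₀ fun l hl => by simp [hl], Pi.single_eq_same,
    rpow_mul_natCast (by positivity)]

lemma prod_spectralTerm_single_le (l₀ : Fin D) (p : Fin D → ℕ) :
    ∏ l, spectralTerm b ((Pi.single l₀ (a * n) : Fin D → ℝ) l) B (p l) ≤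
      spectralSummand a b n B p := by
  rw [prod_spectralTerm_single, spectralSummand]
  gcongr
  exact single_le_sum (f := fun l => ((p l : ℝ) + 1) ^ a) (fun l _ => by positivity)
    (mem_univ l₀)

lemma spectralSummand_le (hD : 0 < D) (p : Fin D → ℕ) :
    spectralSummand a b n B p ≤
      D ^ n * ∑ k, ∏ l, spectralTerm b ((Pi.single k (a * n) : Fin D → ℝ) l) B (p l) := by
  simp only [prod_spectralTerm_single, spectralSummand]
  rw [← sum_mul, ← mul_assoc]
  gcongr
  simpa using pow_sum_le_card_pow_mul_sum_pow (univ_nonempty_iff.2 ⟨⟨0, hD⟩⟩)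
    (fun l _ => by positivity : ∀ l ∈ univ, 0 ≤ ((p l : ℝ) + 1) ^ a) n

lemma hasSum_sum_prod_spectralTerm_single (ha : 0 ≤ a) (hb : 0 < b) (hB : 0 < B) :
    HasSum
      (fun p : Fin D → ℕ => ∑ k, ∏ l, spectralTerm b ((Pi.single k (a * n) : Fin D → ℝ) l) B (p l))
      (∑ k, ∏ l, ∑' q, spectralTerm b ((Pi.single k (a * n) : Fin D → ℝ) l) B q) :=
  hasSum_sum fun _ _ =>
    hasSum_prod_spectralTerm hb (Pi.single_nonneg.2 (mul_nonneg ha n.cast_nonneg)) hB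

lemma summable_spectralSummand (ha : 0 ≤ a) (hb : 0 < b) (hB : 0 < B) (hD : 0 < D) :
    Summable fun p : Fin D → ℕ => spectralSummand a b n B p :=
  .of_nonneg_of_le (fun p => by unfold spectralSummand; positivity) (spectralSummand_le hD)
    ((hasSum_sum_prod_spectralTerm_single ha hb hB).summable.mul_left _)

lemma prod_tsum_spectralTerm_single_le_tsum (ha : 0 ≤ a) (hb : 0 < b) (hB : 0 < B)
    (l₀ : Fin D) :
    ∏ l, ∑' q, spectralTerm b ((Pi.single l₀ (a * n) : Fin D → ℝ) l) B q ≤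
      ∑' p : Fin D → ℕ, spectralSummand a b n B p := by
  have hsum := hasSum_prod_spectralTerm (c := Pi.single l₀ (a * n)) hb
    (Pi.single_nonneg.2 (mul_nonneg ha n.cast_nonneg)) hB
  rw [← hsum.tsum_eq]
  exact hsum.summable.tsum_le_tsum (prod_spectralTerm_single_le l₀)
    (summable_spectralSummand ha hb hB l₀.pos)

lemma tsum_spectralSummand_le (ha : 0 ≤ a) (hb : 0 < b) (hB : 0 < B) (hD : 0 < D) :
    ∑' p : Fin D → ℕ, spectralSummand a b n B p ≤
      D ^ n * ∑ k, ∏ l, ∑' q,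
        spectralTerm b ((Pi.single k (a * n) : Fin D → ℝ) l) B q := by
  have hmaj := (hasSum_sum_prod_spectralTerm_single (D := D) (n := n) ha hb hB).mul_left
    ((D : ℝ) ^ n)
  rw [← hmaj.tsum_eq]
  exact (summable_spectralSummand ha hb hB hD).tsum_le_tsum (spectralSummand_le hD) hmaj.summable

end Summand

/-- Multi-dimensional spectral sum: for a ≥ 0, b > 0, D ≥ 1 and n : ℕ,
`S(B) = ∑_{p₁,...,p_D ≥ 1} (∑_l p_l^a)^n e^{-B ∑_l p_l^b}`
behaves like `B^{-(a n + D)/b}` as B → 0⁺. -/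
theorem spectral_sum_multi (a b : ℝ) (ha : 0 ≤ a) (hb : 0 < b) (D : ℕ) (hD : 1 ≤ D)
    (n : ℕ) :
    ∃ c₁ c₂ : ℝ, 0 < c₁ ∧ 0 < c₂ ∧ ∃ B₀ : ℝ, 0 < B₀ ∧
      ∀ B : ℝ, 0 < B → B < B₀ →
        c₁ * B ^ (-(a * n + D) / b) ≤
          (∑' p : Fin D → ℕ,
            (∑ l : Fin D, ((p l : ℝ) + 1) ^ a) ^ n *
              Real.exp (-B * ∑ l : Fin D, ((p l : ℝ) + 1) ^ b)) ∧
        (∑' p : Fin D → ℕ,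
            (∑ l : Fin D, ((p l : ℝ) + 1) ^ a) ^ n *
              Real.exp (-B * ∑ l : Fin D, ((p l : ℝ) + 1) ^ b)) ≤
          c₂ * B ^ (-(a * n + D) / b) := by
  set c : Fin D → Fin D → ℝ := fun k => Pi.single k (a * n)
  have hc : ∀ k, 0 ≤ c k := fun k => Pi.single_nonneg.2 (mul_nonneg ha n.cast_nonneg)
  have hexp : ∀ k, ∑ l, (c k l + 1) = a * n + D := fun k => by simp [c, sum_add_distrib]
  have hΓ : ∀ k l, 0 < Gamma ((c k l + 1) / b) := fun k l =>
    Gamma_pos_of_pos (by have : 0 ≤ c k l := hc k l; positivity)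
  have l₀ : Fin D := ⟨0, hD⟩
  refine ⟨∏ l, exp (-1) / ((c l₀ l + 1) * 2 ^ (c l₀ l + 1)),
    D ^ n * ∑ k, ∏ l, 2 ^ (c k l + 1) * Gamma ((c k l + 1) / b) / b,
    prod_pos fun l _ => by have : 0 ≤ c l₀ l := hc l₀ l; positivity,
    mul_pos (by positivity) (sum_pos (fun k _ => prod_pos fun l _ => by
      have := hΓ k l; positivity) ⟨l₀, mem_univ _⟩),
    1, one_pos, fun B hB hB1 => ?_⟩
  change _ ≤ ∑' p, spectralSummand a b n B p ∧ ∑' p, spectralSummand a b n B p ≤ _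
  constructor
  · calc _ ≤ ∏ l, ∑' q, spectralTerm b (c l₀ l) B q := by
          simpa only [hexp] using le_prod_tsum_spectralTerm hb (hc l₀) hB hB1.le
      _ ≤ _ := prod_tsum_spectralTerm_single_le_tsum ha hb hB l₀
  · calc _ ≤ D ^ n * ∑ k, ∏ l, ∑' q, spectralTerm b (c k l) B q :=
          tsum_spectralSummand_le ha hb hB hD
      _ ≤ _ := by
          rw [mul_assoc, sum_mul]
          gcongr with k
          simpa only [hexp] using prod_tsum_spectralTerm_le hb (hc k) hB
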